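/- Let Φ = {φ₁, φ₂} with φ₁(x) = x/2, φ₂(x) = x/2 + 1/2 (attractor [0,1]). Fix a word J = (j₁,…,j_m) ∈ {1,2}^m and define Ψ(I) = 2^{-|I|} if I does not begin with J, and Ψ(I) = 2^{-|I|}|I|^{-2} if I begins with J. Then ∑_{I begins with J} Ψ(I) < ∞ while ∑_{n=1}^∞ ∑_{I ∈ {1,2}^n} Ψ(I) = ∞, and the set W(Ψ,0) ∩ φ_J([0,1]) has Lebesgue measure zero. -/

import Mathlib

open MeasureTheory Set

/-- The IFS of Example 2: `φ₁(x) = x/2`, `φ₂(x) = x/2 + 1/2` (attractor `[0,1]`). -/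
noncomputable def phiB : Fin 2 → ℝ → ℝ := fun i x => if i = 0 then x / 2 else x / 2 + 1 / 2

/-- `φ_I = φ_{i₁} ∘ ⋯ ∘ φ_{i_n}`. -/
noncomputable def wordApplyB : List (Fin 2) → ℝ → ℝ :=
  fun I => I.foldr (fun i g => phiB i ∘ g) id

/-- `Ψ(I) = 2^{-|I|}` if `I` does not begin with `J`, and `Ψ(I) = 2^{-|I|}·|I|^{-2}`
if `I` begins with `J`. -/
noncomputable def PsiB (J I : List (Fin 2)) : ℝ :=
  if J <+: I then 2 ^ (-(I.length : ℝ)) * ((I.length : ℝ)⁻¹) ^ 2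
  else 2 ^ (-(I.length : ℝ))

/-!
Over the words beginning with `J` we have `Ψ(I) = 2^{-|I|} |I|^{-2}`, and there are `2ⁿ` words
of length `n`, so that series is dominated by `∑ n⁻²`. Among the words of length `n + 1`, the
`2ⁿ` whose first letter differs from that of `J` already contribute `1/2`, so the full series
diverges.

For the measure statement: the maps `φ_I` with `|I| = m` send `[0,1)` onto pairwise disjoint
intervals, so a point of the open cylinder `φ_J((0,1))` keeps a positive distance from `φ_I(0)`
for every long word `I` not beginning with `J`. Such a point therefore lies in infinitely many
balls `B(φ_I(0), Ψ(I))` only if it does so for words beginning with `J`, and by the first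
Borel–Cantelli lemma these points form a null set. The endpoints of `φ_J([0,1])` do not matter.
-/

lemma summable_comp_length_iff {α : Type*} [Fintype α] {g : ℕ → ℝ} (hg : ∀ n, 0 ≤ g n) :
    Summable (fun l : List α => g l.length) ↔
      Summable fun n => (Fintype.card α : ℝ) ^ n * g n := by
  have hlen : (fun l : List α => g l.length) ∘ List.equivSigmaTuple.symm = fun s => g s.1 :=
    funext fun _ => by simp [List.equivSigmaTuple]
  rw [← List.equivSigmaTuple.symm.summable_iff, hlen, summable_sigma_of_nonneg fun _ => hg _]
  simp [Summable.of_finite]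

lemma sum_ofFn_succ {α M : Type*} [Fintype α] [AddCommMonoid M] (f : List α → M) (n : ℕ) :
    ∑ I : Fin (n + 1) → α, f (List.ofFn I) =
      ∑ a, ∑ v : Fin n → α, f (a :: List.ofFn v) := by
  rw [← (Fin.consEquiv fun _ => α).sum_comp, Fintype.sum_prod_type]
  simp [Fin.consEquiv]

lemma volume_setOf_infinite_closedBall_eq_zero {ι : Type*} [Countable ι] {c r : ι → ℝ}
    (hr : Summable r) : volume {x : ℝ | {i | |x - c i| ≤ r i}.Infinite} = 0 := by
  have hsum : ∑' i, volume (Metric.closedBall (c i) (r i)) ≠ ⊤ := by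
    simp_rw [Real.volume_closedBall]
    exact ENNReal.tsum_coe_ne_top_iff_summable.mpr (hr.mul_left 2).toNNReal
  convert measure_limsup_cofinite_eq_zero hsum using 2
  rw [Filter.cofinite.limsup_set_eq]
  simp [Real.dist_eq]

lemma wordApplyB_cons (i : Fin 2) (I : List (Fin 2)) :
    wordApplyB (i :: I) = phiB i ∘ wordApplyB I := rfl

lemma wordApplyB_eq_mul_add (I : List (Fin 2)) (x : ℝ) :
    wordApplyB I x = (2 ^ I.length)⁻¹ * x + wordApplyB I 0 := by
  induction I with
  | nil => simp [wordApplyB]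
  | cons i I ih =>
    simp only [wordApplyB_cons, Function.comp_apply, ih, phiB, List.length_cons, pow_succ]
    split_ifs <;> ring

lemma isOpenMap_wordApplyB (I : List (Fin 2)) : IsOpenMap (wordApplyB I) := by
  have hc : ((2 : ℝ) ^ I.length)⁻¹ ≠ 0 := by positivity
  have h : wordApplyB I =
      (Homeomorph.mulLeft₀ _ hc).trans (Homeomorph.addRight (wordApplyB I 0)) :=
    funext (wordApplyB_eq_mul_add I)
  rw [h]
  exact Homeomorph.isOpenMap _

lemma mapsTo_phiB_Ico (i : Fin 2) : MapsTo (phiB i) (Ico 0 1) (Ico 0 1) := by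
  intro x ⟨h0, h1⟩
  unfold phiB
  split_ifs <;> constructor <;> linarith

lemma mapsTo_wordApplyB_Ico (I : List (Fin 2)) : MapsTo (wordApplyB I) (Ico 0 1) (Ico 0 1) := by
  induction I with
  | nil => exact mapsTo_id _
  | cons i I ih => exact (mapsTo_phiB_Ico i).comp ih

lemma eq_of_phiB_eq_phiB {i j : Fin 2} {u v : ℝ} (hu : u ∈ Ico 0 1) (hv : v ∈ Ico 0 1)
    (h : phiB i u = phiB j v) : i = j ∧ u = v := by
  obtain ⟨hu0, hu1⟩ := hu
  obtain ⟨hv0, hv1⟩ := hv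
  unfold phiB at h
  fin_cases i <;> fin_cases j <;> simp at h ⊢ <;> linarith

lemma prefix_of_wordApplyB_mem_image_Ico {J I : List (Fin 2)} (hlen : J.length ≤ I.length)
    {y : ℝ} (hy : y ∈ Ico 0 1) (hmem : wordApplyB I y ∈ wordApplyB J '' Ico 0 1) : J <+: I := by
  induction J generalizing I with
  | nil => exact List.nil_prefix
  | cons j J ih =>
    rw [List.length_cons] at hlen
    obtain ⟨i, I, rfl⟩ := List.exists_cons_of_length_pos (l := I) (by omega)
    obtain ⟨z, hz, hzI⟩ := hmem
    obtain ⟨rfl, heq⟩ := eq_of_phiB_eq_phiB (mapsTo_wordApplyB_Ico J hz)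
      (mapsTo_wordApplyB_Ico I hy) hzI
    exact List.cons_prefix_cons.mpr ⟨rfl, ih (by simpa using hlen) ⟨z, hz, heq⟩⟩

lemma exists_forall_lt_abs_sub_wordApplyB {J : List (Fin 2)} {x : ℝ}
    (hx : x ∈ wordApplyB J '' Ioo 0 1) : ∃ N, ∀ I : List (Fin 2), N ≤ I.length → ¬ J <+: I →
      (2 ^ I.length : ℝ)⁻¹ < |x - wordApplyB I 0| := by
  obtain ⟨δ, hδ, hball⟩ := Metric.isOpen_iff.mp (isOpenMap_wordApplyB J _ isOpen_Ioo) x hx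
  obtain ⟨N, hN⟩ := exists_pow_lt_of_lt_one hδ (by norm_num : (2⁻¹ : ℝ) < 1)
  refine ⟨max N J.length, fun I hI hJI => ?_⟩
  have hfar : δ ≤ |x - wordApplyB I 0| := by
    by_contra! hclose
    refine hJI (prefix_of_wordApplyB_mem_image_Ico (le_of_max_le_right hI)
      (left_mem_Ico.mpr one_pos) (image_mono Ioo_subset_Ico_self (hball ?_)))
    rwa [Metric.mem_ball, Real.dist_eq, abs_sub_comm]
  calc (2 ^ I.length : ℝ)⁻¹ = 2⁻¹ ^ I.length := (inv_pow _ _).symm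
    _ ≤ 2⁻¹ ^ N := pow_le_pow_of_le_one (by norm_num) (by norm_num) (le_of_max_le_left hI)
    _ < δ := hN
    _ ≤ |x - wordApplyB I 0| := hfar

lemma PsiB_nonneg (J I : List (Fin 2)) : 0 ≤ PsiB J I := by
  unfold PsiB; split_ifs <;> positivity

lemma PsiB_of_prefix {J I : List (Fin 2)} (h : J <+: I) :
    PsiB J I = (2 ^ I.length)⁻¹ * ((I.length : ℝ) ^ 2)⁻¹ := by
  rw [PsiB, if_pos h, Real.rpow_neg_natCast, zpow_neg, zpow_natCast, inv_pow]

lemma PsiB_of_not_prefix {J I : List (Fin 2)} (h : ¬ J <+: I) : PsiB J I = (2 ^ I.length)⁻¹ := by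
  rw [PsiB, if_neg h, Real.rpow_neg_natCast, zpow_neg, zpow_natCast]

lemma summable_PsiB_prefix (J : List (Fin 2)) :
    Summable fun I : {I : List (Fin 2) // J <+: I} => PsiB J I.1 := by
  have hsum : Summable fun I : List (Fin 2) => (2 ^ I.length : ℝ)⁻¹ * ((I.length : ℝ) ^ 2)⁻¹ := by
    refine (summable_comp_length_iff (α := Fin 2) (g := fun n => (2 ^ n : ℝ)⁻¹ * ((n : ℝ) ^ 2)⁻¹)
      (fun n => by positivity)).mpr ?_
    simp [Real.summable_nat_pow_inv]
  exact (hsum.subtype _).congr fun I => (PsiB_of_prefix I.2).symm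

lemma half_le_sum_PsiB {J : List (Fin 2)} (hJ : J ≠ []) (n : ℕ) :
    1 / 2 ≤ ∑ I : Fin (n + 1) → Fin 2, PsiB J (List.ofFn I) := by
  obtain ⟨j, J, rfl⟩ := List.exists_cons_of_ne_nil hJ
  obtain ⟨b, hb⟩ := exists_ne j
  have hnot : ∀ v : Fin n → Fin 2, ¬ j :: J <+: b :: List.ofFn v :=
    fun v h => hb (List.cons_prefix_cons.mp h).1.symm
  rw [sum_ofFn_succ]
  calc (1 / 2 : ℝ) = ∑ v : Fin n → Fin 2, PsiB (j :: J) (b :: List.ofFn v) := by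
        simp [PsiB_of_not_prefix (hnot _), pow_succ]
        field_simp
    _ ≤ _ := Finset.single_le_sum
        (f := fun a => ∑ v : Fin n → Fin 2, PsiB (j :: J) (a :: List.ofFn v))
        (fun a _ => Finset.sum_nonneg fun v _ => PsiB_nonneg _ _) (Finset.mem_univ b)

lemma not_summable_sum_PsiB {J : List (Fin 2)} (hJ : J ≠ []) :
    ¬ Summable fun n : ℕ => ∑ I : Fin n → Fin 2, PsiB J (List.ofFn I) := fun h =>
  absurd (ge_of_tendsto' ((summable_nat_add_iff 1).mpr h).tendsto_atTop_zero
    (half_le_sum_PsiB hJ)) (by norm_num)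

lemma volume_setOf_infinite_inter_image_eq_zero (J : List (Fin 2)) :
    volume ({x ∈ Icc (0 : ℝ) 1 |
        {I : List (Fin 2) | |x - wordApplyB I 0| ≤ PsiB J I}.Infinite} ∩
      wordApplyB J '' Icc 0 1) = 0 := by
  set E := {x : ℝ | {I : {I // J <+: I} | |x - wordApplyB I.1 0| ≤ PsiB J I.1}.Infinite}
  have hE : volume E = 0 := volume_setOf_infinite_closedBall_eq_zero (summable_PsiB_prefix J)
  refine measure_mono_null (t := {wordApplyB J 0, wordApplyB J 1} ∪ E) ?_
    (measure_union_null ((toFinite _).measure_zero _) hE)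
  rintro x ⟨⟨-, hinf⟩, hxJ⟩
  rw [← Ico_insert_right zero_le_one, ← Ioo_insert_left zero_lt_one, image_insert_eq,
    image_insert_eq] at hxJ
  rcases hxJ with rfl | rfl | hx
  · simp
  · simp
  right
  obtain ⟨N, hN⟩ := exists_forall_lt_abs_sub_wordApplyB hx
  have hsub : {I | |x - wordApplyB I 0| ≤ PsiB J I} ⊆ {I | I.length < N} ∪
      Subtype.val '' {I : {I // J <+: I} | |x - wordApplyB I.1 0| ≤ PsiB J I.1} := by
    intro I hI
    by_cases hJI : J <+: I
    · exact Or.inr ⟨⟨I, hJI⟩, hI, rfl⟩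
    · refine Or.inl (lt_of_not_ge fun hlen => (hN I hlen hJI).not_ge ?_)
      rwa [← PsiB_of_not_prefix hJI]
  exact ((infinite_union.mp (hinf.mono hsub)).resolve_left
    (List.finite_length_lt _ N).not_infinite).of_image _

/-- `∑_{I begins with J} Ψ(I) < ∞` while `∑_n ∑_{I ∈ {1,2}^n} Ψ(I) = ∞`,
and `W(Ψ,0) ∩ φ_J([0,1])` has Lebesgue measure zero. -/
theorem stmt_8 (m : ℕ) (hm : 0 < m) (J : List (Fin 2)) (hJ : J.length = m) :
    Summable (fun I : {I : List (Fin 2) // J <+: I} => PsiB J I.1) ∧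
    ¬ Summable (fun n : ℕ => ∑ I : Fin n → Fin 2, PsiB J (List.ofFn I)) ∧
    volume ({x ∈ Set.Icc (0 : ℝ) 1 |
        {I : List (Fin 2) | |x - wordApplyB I 0| ≤ PsiB J I}.Infinite} ∩
      wordApplyB J '' Set.Icc (0 : ℝ) 1) = 0 :=
  ⟨summable_PsiB_prefix J, not_summable_sum_PsiB (List.ne_nil_of_length_pos (hJ ▸ hm)),
    volume_setOf_infinite_inter_image_eq_zero J⟩
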